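/- arXiv:1712.06242 — 2 statements merged into one kernel-verified Lean document; each statement's English description precedes it below -/
import Mathlib

section
/- (Squeezing lemma, scalar case) Suppose C ≥ 0 is such that for every C¹ function v̂ : ℝ² → ℝ with ∫_{K̂} v̂ dx = 0 one has ∫_{K̂} v̂² dx ≤ C² ∫_{K̂} |∇v̂|² dx. Then for all α, β > 0 and every C¹ function v : ℝ² → ℝ with ∫_{K_{αβ}} v dx = 0, where K_{αβ} is the triangle with vertices (0,0), (α,0), (0,β), one has ∫_{K_{αβ}} v² dx ≤ (max{α, β})² C² ∫_{K_{αβ}} |∇v|² dx. -/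
open MeasureTheory

noncomputable section

abbrev E2 : Type := EuclideanSpace ℝ (Fin 2)

/-- The point (a, b) in the Euclidean plane. -/
def pt (a b : ℝ) : E2 := WithLp.toLp 2 ![a, b]

/-- First standard basis vector. -/
def vex : E2 := pt 1 0
/-- Second standard basis vector. -/
def vey : E2 := pt 0 1

/-- Euclidean dot product on the plane. -/
def dot2 (v w : E2) : ℝ := v 0 * w 0 + v 1 * w 1

/-- rot (w₁, w₂) = (w₂, −w₁). -/
def rot (w : E2) : E2 := pt (w 1) (-(w 0))

/-- Flux of a vector field across the (oriented) segment from `a` to `b`: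
∫₀¹ q(a + t(b − a)) · rot(b − a) dt, the line integral of the normal component. -/
def flux (q : E2 → E2) (a b : E2) : ℝ :=
  ∫ t in (0:ℝ)..1, dot2 (q (a + t • (b - a))) (rot (b - a))

/-- Squared Euclidean norm of the gradient of a scalar function. -/
def gradSq (v : E2 → ℝ) (x : E2) : ℝ :=
  (fderiv ℝ v x vex) ^ 2 + (fderiv ℝ v x vey) ^ 2

/-- Gradient vector of a scalar function. -/
def gradVec (v : E2 → ℝ) (x : E2) : E2 :=
  pt (fderiv ℝ v x vex) (fderiv ℝ v x vey)

/-- Squared Frobenius norm of the Jacobian of a vector field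
(sum of squares of the four first-order partial derivatives). -/
def frobSq (q : E2 → E2) (x : E2) : ℝ :=
  (fderiv ℝ q x vex 0) ^ 2 + (fderiv ℝ q x vey 0) ^ 2 +
  (fderiv ℝ q x vex 1) ^ 2 + (fderiv ℝ q x vey 1) ^ 2

/-- Divergence of a planar vector field. -/
def divg (q : E2 → E2) (x : E2) : ℝ := fderiv ℝ q x vex 0 + fderiv ℝ q x vey 1

/-- The reference triangle with vertices (0,0), (1,0), (0,1). -/
def Khat : Set E2 := convexHull ℝ {pt 0 0, pt 1 0, pt 0 1}

/-- The triangle with vertices (0,0), (α,0), (0,β). -/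
def Kab (a b : ℝ) : Set E2 := convexHull ℝ {pt 0 0, pt a 0, pt 0 b}

/-- Matrix–vector multiplication for 2×2 matrices acting on the plane. -/
def matVec (A : Matrix (Fin 2) (Fin 2) ℝ) (x : E2) : E2 :=
  pt (A 0 0 * x 0 + A 0 1 * x 1) (A 1 0 * x 0 + A 1 1 * x 1)

/-- Squared Frobenius norm of a 2×2 matrix. -/
def mFrobSq (M : Matrix (Fin 2) (Fin 2) ℝ) : ℝ :=
  M 0 0 ^ 2 + M 0 1 ^ 2 + M 1 0 ^ 2 + M 1 1 ^ 2

/-!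
The diagonal map `T = diag(α, β)` carries `K̂` onto `K_{αβ}` with Jacobian `αβ`. Pulling `v`
back to `u = v ∘ T` preserves the zero mean, and the chain rule gives
`|∇u|² = α² (∂₁v)² + β² (∂₂v)² ≤ max{α,β}² |∇v|² ∘ T`; the factor `αβ` cancels between the two
sides of the Poincaré inequality for `u`.
-/

section ChangeOfVariables

variable {E F : Type*} [NormedAddCommGroup E] [NormedSpace ℝ E] [FiniteDimensional ℝ E]
  [MeasurableSpace E] [BorelSpace E] [NormedAddCommGroup F] [NormedSpace ℝ F]
  (μ : Measure E) [μ.IsAddHaarMeasure]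

theorem setIntegral_image_continuousLinearMap (T : E →L[ℝ] E) (hT : Function.Injective T)
    {s : Set E} (hs : MeasurableSet s) (g : E → F) :
    ∫ x in T '' s, g x ∂μ = |T.det| • ∫ x in s, g (T x) ∂μ := by
  rw [integral_image_eq_integral_abs_det_fderiv_smul μ hs
    (fun x _ => T.hasFDerivAt.hasFDerivWithinAt) hT.injOn g, integral_smul]

end ChangeOfVariables

def diagCLM (a b : ℝ) : E2 →L[ℝ] E2 :=
  LinearMap.toContinuousLinearMap (Matrix.toLpLin 2 2 (Matrix.diagonal ![a, b]))

section diagCLM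

variable (a b : ℝ)

@[simp]
theorem diagCLM_apply_zero (x : E2) : diagCLM a b x 0 = a * x 0 := by
  simp [diagCLM, Matrix.toLpLin_apply, Matrix.diagonal]

@[simp]
theorem diagCLM_apply_one (x : E2) : diagCLM a b x 1 = b * x 1 := by
  simp [diagCLM, Matrix.toLpLin_apply, Matrix.diagonal]

theorem diagCLM_pt (x y : ℝ) : diagCLM a b (pt x y) = pt (a * x) (b * y) := by
  ext i; fin_cases i <;> simp [pt]

theorem det_diagCLM : (diagCLM a b).det = a * b := by
  simp [diagCLM, ContinuousLinearMap.det, Matrix.toLpLin_eq_toLin, LinearMap.det_toLin,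
    Matrix.det_diagonal, Fin.prod_univ_two]

theorem diagCLM_injective {a b : ℝ} (ha : a ≠ 0) (hb : b ≠ 0) :
    Function.Injective (diagCLM a b) := by
  intro x y h
  ext i
  fin_cases i
  · simpa [ha] using congrArg (· 0) h
  · simpa [hb] using congrArg (· 1) h

theorem diagCLM_image_Khat : diagCLM a b '' Khat = Kab a b := by
  rw [Khat, Kab, ← ContinuousLinearMap.coe_coe, LinearMap.image_convexHull]
  simp only [ContinuousLinearMap.coe_coe, Set.image_insert_eq, Set.image_singleton, diagCLM_pt,
    mul_zero, mul_one]

theorem gradSq_comp_diagCLM {v : E2 → ℝ} {x : E2}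
    (hv : DifferentiableAt ℝ v (diagCLM a b x)) :
    gradSq (v ∘ diagCLM a b) x =
      a ^ 2 * fderiv ℝ v (diagCLM a b x) vex ^ 2 + b ^ 2 * fderiv ℝ v (diagCLM a b x) vey ^ 2 := by
  rw [gradSq, fderiv_comp x hv (diagCLM a b).differentiableAt, ContinuousLinearMap.fderiv]
  have hex : diagCLM a b vex = a • vex := by ext i; fin_cases i <;> simp [vex, pt]
  have hey : diagCLM a b vey = b • vey := by ext i; fin_cases i <;> simp [vey, pt]
  simp only [ContinuousLinearMap.comp_apply, hex, hey, map_smul, smul_eq_mul]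
  ring

theorem gradSq_comp_diagCLM_le {v : E2 → ℝ} {x : E2}
    (hv : DifferentiableAt ℝ v (diagCLM a b x)) (ha : 0 ≤ a) (hb : 0 ≤ b) :
    gradSq (v ∘ diagCLM a b) x ≤ max a b ^ 2 * gradSq v (diagCLM a b x) := by
  have ha' : a ^ 2 ≤ max a b ^ 2 := pow_le_pow_left₀ ha (le_max_left a b) 2
  have hb' : b ^ 2 ≤ max a b ^ 2 := pow_le_pow_left₀ hb (le_max_right a b) 2
  rw [gradSq_comp_diagCLM a b hv, gradSq, mul_add]
  gcongr

end diagCLM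

theorem isCompact_Khat : IsCompact Khat :=
  Set.Finite.isCompact_convexHull ℝ (Set.toFinite _)

theorem setIntegral_Kab {a b : ℝ} (ha : 0 < a) (hb : 0 < b) (g : E2 → ℝ) :
    ∫ x in Kab a b, g x = a * b * ∫ x in Khat, g (diagCLM a b x) := by
  rw [← diagCLM_image_Khat, setIntegral_image_continuousLinearMap volume _
    (diagCLM_injective ha.ne' hb.ne') isCompact_Khat.measurableSet, det_diagCLM,
    abs_of_pos (mul_pos ha hb), smul_eq_mul]

theorem ContDiff.continuous_gradSq {v : E2 → ℝ} (hv : ContDiff ℝ 1 v) : Continuous (gradSq v) := by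
  have h := hv.continuous_fderiv one_ne_zero
  exact ((h.clm_apply continuous_const).pow 2).add ((h.clm_apply continuous_const).pow 2)

theorem setIntegral_gradSq_comp_diagCLM_le {a b : ℝ} (ha : 0 ≤ a) (hb : 0 ≤ b) {v : E2 → ℝ}
    (hv : ContDiff ℝ 1 v) :
    ∫ x in Khat, gradSq (v ∘ diagCLM a b) x ≤
      max a b ^ 2 * ∫ x in Khat, gradSq v (diagCLM a b x) := by
  rw [← integral_const_mul]
  refine setIntegral_mono_on ?_ ?_ isCompact_Khat.measurableSet
    fun x _ => gradSq_comp_diagCLM_le a b (hv.differentiable one_ne_zero _) ha hb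
  · exact (hv.comp (diagCLM a b).contDiff).continuous_gradSq.continuousOn.integrableOn_compact
      isCompact_Khat
  · exact (continuous_const.mul (hv.continuous_gradSq.comp (diagCLM a b).continuous))
      |>.continuousOn.integrableOn_compact isCompact_Khat

theorem stmt9_general (C : ℝ)
    (href : ∀ v : E2 → ℝ, ContDiff ℝ 1 v → (∫ x in Khat, v x) = 0 →
      (∫ x in Khat, (v x) ^ 2) ≤ C ^ 2 * ∫ x in Khat, gradSq v x) :
    ∀ α β : ℝ, 0 < α → 0 < β →
      ∀ v : E2 → ℝ, ContDiff ℝ 1 v → (∫ x in Kab α β, v x) = 0 →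
        (∫ x in Kab α β, (v x) ^ 2) ≤
          (max α β) ^ 2 * C ^ 2 * ∫ x in Kab α β, gradSq v x := by
  intro α β hα hβ v hv hmean
  have hαβ : 0 < α * β := mul_pos hα hβ
  have hu : ContDiff ℝ 1 (v ∘ diagCLM α β) := hv.comp (diagCLM α β).contDiff
  have hu_mean : ∫ x in Khat, (v ∘ diagCLM α β) x = 0 := by
    simpa [setIntegral_Kab hα hβ, hαβ.ne'] using hmean
  have hpoincare := href _ hu hu_mean
  have hgrad := setIntegral_gradSq_comp_diagCLM_le hα.le hβ.le hv
  rw [setIntegral_Kab hα hβ, setIntegral_Kab hα hβ]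
  calc α * β * ∫ x in Khat, v (diagCLM α β x) ^ 2
      ≤ α * β * (C ^ 2 * ∫ x in Khat, gradSq (v ∘ diagCLM α β) x) :=
        mul_le_mul_of_nonneg_left hpoincare hαβ.le
    _ ≤ α * β * (C ^ 2 * (max α β ^ 2 * ∫ x in Khat, gradSq v (diagCLM α β x))) := by gcongr
    _ = max α β ^ 2 * C ^ 2 * (α * β * ∫ x in Khat, gradSq v (diagCLM α β x)) := by ring

/-- Squeezing lemma, scalar case: a Poincaré–Wirtinger constant `C` on the
reference triangle yields the constant `max{α,β} C` on the squeezed triangle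
`K_{αβ}` with vertices (0,0), (α,0), (0,β). -/
theorem stmt9 (C : ℝ) (hC : 0 ≤ C)
    (href : ∀ v : E2 → ℝ, ContDiff ℝ 1 v → (∫ x in Khat, v x) = 0 →
      (∫ x in Khat, (v x) ^ 2) ≤ C ^ 2 * ∫ x in Khat, gradSq v x) :
    ∀ α β : ℝ, 0 < α → 0 < β →
      ∀ v : E2 → ℝ, ContDiff ℝ 1 v → (∫ x in Kab α β, v x) = 0 →
        (∫ x in Kab α β, (v x) ^ 2) ≤
          (max α β) ^ 2 * C ^ 2 * ∫ x in Kab α β, gradSq v x :=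
  stmt9_general C href

end
end

section
/- Let α ≥ β > 0 and s, t ∈ ℝ with s² + t² = 1 and t > 0, and let K be the triangle with vertices x₁ = (0,0), x₂ = (α,0), x₃ = (βs, βt). Suppose the edge joining x₂ and x₃ is the longest edge of K, i.e. |x₂ − x₃| ≥ α. Then (1 + |s|)/√(1 − |s|) ≤ 4√2 · R_K/α, where R_K is the circumradius of K. -/
/-!
By the law of sines, the edge opposite the origin has length `2 R_K t`, `t` being the sine of
the angle at the origin; as it is the longest edge, `α ≤ 2 R_K t`. With `u = |s|` we have
`t = √(1 - u) √(1 + u)`, so `(1 + u) / √(1 - u) = (1 + u)^{3/2} / t ≤ 2√2 / t ≤ 4√2 R_K / α`.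
-/

open MeasureTheory

noncomputable section

open Real

@[simp] lemma pt_apply_zero (a b : ℝ) : pt a b 0 = a := rfl
@[simp] lemma pt_apply_one (a b : ℝ) : pt a b 1 = b := rfl

lemma E2.dist_sq_eq (x y : E2) : dist x y ^ 2 = (x 0 - y 0) ^ 2 + (x 1 - y 1) ^ 2 := by
  rw [EuclideanSpace.dist_eq, sq_sqrt (by positivity)]
  simp [Fin.sum_univ_two, Real.dist_eq, sq_abs]

lemma two_mul_radius_mul_sin_eq_dist (α β s t R : ℝ) (c : E2) (hα : α ≠ 0) (hβ : β ≠ 0)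
    (hst : s ^ 2 + t ^ 2 = 1) (ht : 0 ≤ t) (hc₁ : dist c (pt 0 0) = R)
    (hc₂ : dist c (pt α 0) = R) (hc₃ : dist c (pt (β * s) (β * t)) = R) :
    2 * R * t = dist (pt α 0) (pt (β * s) (β * t)) := by
  have e₁ := E2.dist_sq_eq c (pt 0 0)
  have e₂ := E2.dist_sq_eq c (pt α 0)
  have e₃ := E2.dist_sq_eq c (pt (β * s) (β * t))
  have ea := E2.dist_sq_eq (pt α 0) (pt (β * s) (β * t))
  simp only [hc₁, hc₂, hc₃, pt_apply_zero, pt_apply_one] at e₁ e₂ e₃ ea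
  have hc0 : c 0 = α / 2 := by
    have : α * (2 * c 0) = α * α := by linear_combination e₂ - e₁
    linarith [mul_left_cancel₀ hα this]
  have hc1 : 2 * t * c 1 = β - α * s := by
    have : β * (α * s + 2 * t * c 1) = β * β := by
      linear_combination e₃ - e₁ + β ^ 2 * hst - 2 * β * s * hc0
    linarith [mul_left_cancel₀ hβ this]
  have hR : 0 ≤ R := hc₁ ▸ dist_nonneg
  -- `c = (α/2, (β - α s)/(2t))`, and `(2Rt)² = 4t²|c|²` expands to `|x₂ - x₃|²`.
  refine (pow_left_inj₀ (by positivity) dist_nonneg two_ne_zero).mp ?_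
  linear_combination 4 * t ^ 2 * e₁ + 4 * t ^ 2 * (c 0 + α / 2) * hc0
    + (2 * t * c 1 + β - α * s) * hc1 - ea + (α ^ 2 - β ^ 2) * hst

lemma one_add_abs_div_sqrt_one_sub_abs_mul_le (s t : ℝ) (hst : s ^ 2 + t ^ 2 = 1) (ht : 0 < t) :
    (1 + |s|) / √(1 - |s|) * t ≤ 2 * √2 := by
  have hu : |s| < 1 := by nlinarith [sq_abs s, abs_nonneg s]
  have ht_eq : t = √(1 - |s|) * √(1 + |s|) := by
    rw [← sqrt_mul (by linarith), ← sqrt_sq ht.le]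
    congr 1
    linear_combination hst + sq_abs s
  have hP : 0 < √(1 - |s|) := sqrt_pos.mpr (by linarith)
  calc (1 + |s|) / √(1 - |s|) * t = (1 + |s|) * √(1 + |s|) := by
        rw [ht_eq]; field_simp
    _ ≤ 2 * √2 := by
        gcongr <;> linarith

/-- Geometric inequality `(1 + |s|)/√(1 − |s|) ≤ 4√2 R_K/α` for the triangle with
vertices (0,0), (α,0), (βs, βt), provided the edge joining the last two vertices
is the longest edge. -/
theorem stmt13 (α β s t : ℝ) (hβ : 0 < β) (hβα : β ≤ α)
    (hst : s ^ 2 + t ^ 2 = 1) (ht : 0 < t)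
    (x₁ x₂ x₃ : E2) (h₁ : x₁ = pt 0 0) (h₂ : x₂ = pt α 0) (h₃ : x₃ = pt (β * s) (β * t))
    (hlong : α ≤ dist x₂ x₃)
    (R : ℝ) (c : E2) (hc₁ : dist c x₁ = R) (hc₂ : dist c x₂ = R) (hc₃ : dist c x₃ = R) :
    (1 + |s|) / Real.sqrt (1 - |s|) ≤ 4 * Real.sqrt 2 * (R / α) := by
  subst h₁ h₂ h₃
  have hα : 0 < α := hβ.trans_le hβα
  have hsin := two_mul_radius_mul_sin_eq_dist α β s t R c hα.ne' hβ.ne' hst ht.le hc₁ hc₂ hc₃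
  have hαR : 1 ≤ 2 * R * t / α := by rw [le_div_iff₀ hα]; linarith
  calc (1 + |s|) / √(1 - |s|) = (1 + |s|) / √(1 - |s|) * t / t := by field_simp
    _ ≤ 2 * √2 / t :=
        div_le_div_of_nonneg_right (one_add_abs_div_sqrt_one_sub_abs_mul_le s t hst ht) ht.le
    _ ≤ 4 * √2 * (R / α) := by
        rw [div_le_iff₀ ht]
        calc 2 * √2 ≤ 2 * √2 * (2 * R * t / α) := le_mul_of_one_le_right (by positivity) hαR
          _ = 4 * √2 * (R / α) * t := by ring

end
end
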